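/- arXiv:2404.17289 — 4 statements merged into one kernel-verified Lean document; each statement's English description precedes it below -/
import Mathlib

section
/- Let T be the Cesàro operator on C[0,1], defined by (Tf)(0) = f(0) and (Tf)(t) = (1/t)∫_0^t f(s) ds for t > 0. Then f ∈ Ran(I − T) if and only if f(0) = 0 and the improper Riemann integral ∫_0^1 f(t)/t dt exists (i.e., lim_{ε→0+} ∫_ε^1 f(t)/t dt exists). -/
open Filter Topology MeasureTheory intervalIntegral

noncomputable section
open Set

/-- The Cesàro operator on functions: `(Tf)(0) = f(0)` and
`(Tf)(t) = (1/t) ∫_0^t f(s) ds` for `t ≠ 0`. -/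
def cesaroFun (f : ℝ → ℂ) (t : ℝ) : ℂ :=
  if t = 0 then f 0 else (t : ℂ)⁻¹ • ∫ s in (0 : ℝ)..t, f s

lemma cesaroFun_deriv (g : ℝ → ℂ) (hg : Continuous g) (t : ℝ) (ht : t ≠ 0) :
    HasDerivAt (fun u : ℝ => ((u:ℂ))⁻¹ * ∫ s in (0:ℝ)..u, g s)
      ((g t - (t:ℂ)⁻¹ * ∫ s in (0:ℝ)..t, g s) / t) t := by
  have hI : HasDerivAt (fun u : ℝ => ∫ s in (0:ℝ)..u, g s) (g t) t :=
    integral_hasDerivAt_right (hg.intervalIntegrable _ _)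
      hg.stronglyMeasurable.stronglyMeasurableAtFilter hg.continuousAt
  have htc : (t:ℂ) ≠ 0 := by exact_mod_cast ht
  have hinv : HasDerivAt (fun u : ℝ => ((u:ℂ))⁻¹) (-(((t:ℂ))^2)⁻¹) t :=
    (hasDerivAt_inv htc).comp_ofReal
  have := hinv.mul hI
  refine this.congr_deriv ?_
  field_simp
  ring

lemma cesaroFun_eq (g : ℝ → ℂ) {t : ℝ} (ht : t ≠ 0) :
    cesaroFun g t = (t:ℂ)⁻¹ * ∫ s in (0:ℝ)..t, g s := by
  rw [cesaroFun, if_neg ht, smul_eq_mul]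

lemma forward_aux (g : ℝ → ℂ) (hg : Continuous g) :
    Tendsto (fun ε : ℝ => ∫ t in ε..1, (g t - cesaroFun g t) / (t:ℂ)) (𝓝[>] 0)
      (𝓝 ((∫ s in (0:ℝ)..1, g s) - g 0)) := by
  set I : ℝ → ℂ := fun u => ∫ s in (0:ℝ)..u, g s with hIdef
  set F : ℝ → ℂ := fun u => ((u:ℂ))⁻¹ * I u with hFdef
  have hIcont : Continuous I := intervalIntegral.continuous_primitive
    (fun a b => hg.intervalIntegrable a b) 0
  -- Step A : for ε ∈ Ioc 0 1, the integral equals F 1 - F ε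
  have stepA : ∀ ε ∈ Ioc (0:ℝ) 1,
      (∫ t in ε..1, (g t - cesaroFun g t) / (t:ℂ)) = F 1 - F ε := by
    intro ε hε
    have huIcc : uIcc ε 1 = Icc ε 1 := uIcc_of_le hε.2
    have hderiv : ∀ t ∈ uIcc ε 1,
        HasDerivAt F ((g t - F t) / t) t := by
      intro t htm
      rw [huIcc] at htm
      exact cesaroFun_deriv g hg t (ne_of_gt (lt_of_lt_of_le hε.1 htm.1))
    have hcont : ContinuousOn (fun t : ℝ => (g t - F t) / (t:ℂ)) (uIcc ε 1) := by
      rw [huIcc]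
      apply ContinuousOn.div
      · exact (hg.continuousOn.sub ((Complex.continuous_ofReal.continuousOn.inv₀
          (fun x hx => by exact_mod_cast (ne_of_gt (lt_of_lt_of_le hε.1 hx.1)))).mul
          hIcont.continuousOn))
      · exact Complex.continuous_ofReal.continuousOn
      · intro x hx
        exact_mod_cast (ne_of_gt (lt_of_lt_of_le hε.1 hx.1))
    have := intervalIntegral.integral_eq_sub_of_hasDerivAt hderiv
      (hcont.intervalIntegrable)
    rw [← this]
    apply intervalIntegral.integral_congr
    intro t htm
    rw [huIcc] at htm
    simp only [cesaroFun_eq g (ne_of_gt (lt_of_lt_of_le hε.1 htm.1))]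
    rfl
  -- Step B : F ε → g 0 as ε → 0+
  have stepB : Tendsto F (𝓝[>] 0) (𝓝 (g 0)) := by
    have hI0 : HasDerivAt I (g 0) 0 :=
      integral_hasDerivAt_right (hg.intervalIntegrable _ _)
        hg.stronglyMeasurable.stronglyMeasurableAtFilter hg.continuousAt
    have hslope := hasDerivAt_iff_tendsto_slope.mp hI0
    have : Tendsto (slope I 0) (𝓝[>] 0) (𝓝 (g 0)) :=
      hslope.mono_left (nhdsWithin_mono 0 (fun x hx => ne_of_gt hx))
    refine this.congr' ?_
    filter_upwards [self_mem_nhdsWithin] with ε (hε : ε ∈ Ioi (0:ℝ))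
    have : I 0 = 0 := intervalIntegral.integral_same
    rw [slope_def_module, this, sub_zero, hFdef]
    simp [Complex.real_smul, sub_zero]
  -- combine
  have hF1 : F 1 = ∫ s in (0:ℝ)..1, g s := by simp [hFdef, hIdef]
  have : Tendsto (fun ε => F 1 - F ε) (𝓝[>] 0) (𝓝 (F 1 - g 0)) :=
    tendsto_const_nhds.sub stepB
  rw [← hF1]
  refine this.congr' ?_
  filter_upwards [Ioc_mem_nhdsGT_of_mem (by norm_num : (0:ℝ) ∈ Ico (0:ℝ) 1)] with ε hε
  exact (stepA ε hε).symm

lemma converse_aux (f : ℝ → ℂ) (hf : Continuous f) (hf0 : f 0 = 0) (L : ℂ)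
    (hL : Tendsto (fun ε : ℝ => ∫ t in ε..1, f t / (t:ℂ)) (𝓝[>] 0) (𝓝 L)) :
    ∃ h : ℝ → ℂ, ContinuousOn h (Icc 0 1) ∧
      ∀ t ∈ Icc (0:ℝ) 1, h t - cesaroFun h t = f t := by
  set φ : ℝ → ℂ := fun t => f t / (t:ℂ) with hφdef
  have hφmeas : Measurable φ :=
    hf.measurable.div Complex.measurable_ofReal
  have hφcont : ∀ t : ℝ, 0 < t → ContinuousAt φ t := by
    intro t ht
    exact hf.continuousAt.div Complex.continuous_ofReal.continuousAt
      (by exact_mod_cast ne_of_gt ht)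
  have hφint : ∀ u : ℝ, 0 < u → IntervalIntegrable φ volume 1 u := by
    intro u hu
    apply ContinuousOn.intervalIntegrable
    intro x hx
    have hx0 : 0 < x := lt_of_lt_of_le (lt_min one_pos hu) hx.1
    exact (hφcont x hx0).continuousWithinAt
  set G : ℝ → ℂ := fun u => ∫ s in (1:ℝ)..u, φ s with hGdef
  have hGt : ∀ t : ℝ, 0 < t → HasDerivAt G (φ t) t := by
    intro t ht
    exact integral_hasDerivAt_right (hφint t ht)
      hφmeas.stronglyMeasurable.stronglyMeasurableAtFilter (hφcont t ht)
  have hGL : Tendsto G (𝓝[>] 0) (𝓝 (-L)) := by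
    have := hL.neg
    refine this.congr ?_
    intro ε
    rw [hGdef]
    exact (intervalIntegral.integral_symm ε 1).symm
  set g : ℝ → ℂ := fun t => if t = 0 then -L else G t with hgdef
  set h : ℝ → ℂ := fun t => f t + g t with hhdef
  have hg_eqG : ∀ t : ℝ, t ≠ 0 → g t = G t := fun t ht => if_neg ht
  have hgcont : ContinuousOn g (Icc 0 1) := by
    intro t ht
    by_cases ht0 : t = 0
    · subst ht0
      rw [ContinuousWithinAt, nhdsWithin_Icc_eq_nhdsGE one_pos]
      have hg0 : g 0 = -L := if_pos rfl
      rw [hg0, ← Set.Ioi_union_left, nhdsWithin_union]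
      rw [tendsto_sup]
      constructor
      · refine hGL.congr' ?_
        filter_upwards [self_mem_nhdsWithin] with x (hx : x ∈ Ioi (0:ℝ))
        exact (hg_eqG x (ne_of_gt hx)).symm
      · rw [nhdsWithin_singleton]
        rw [tendsto_pure_left]
        intro s hs
        rw [hg0]
        exact mem_of_mem_nhds hs
    · have htpos : 0 < t := lt_of_le_of_ne ht.1 (Ne.symm ht0)
      have : ContinuousAt g t := by
        refine (hGt t htpos).continuousAt.congr ?_
        filter_upwards [lt_mem_nhds htpos] with x hx
        exact (hg_eqG x (ne_of_gt hx)).symm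
      exact this.continuousWithinAt
  have hhcont : ContinuousOn h (Icc 0 1) := hf.continuousOn.add hgcont
  refine ⟨h, hhcont, ?_⟩
  intro t ht
  by_cases ht0 : t = 0
  · subst ht0
    simp [cesaroFun, hf0]
  have htpos : 0 < t := lt_of_le_of_ne ht.1 (Ne.symm ht0)
  -- key : ∫ s in 0..t, h s = t * G t
  have hhint : ∀ a b : ℝ, a ∈ Icc (0:ℝ) 1 → b ∈ Icc (0:ℝ) 1 →
      IntervalIntegrable h volume a b := by
    intro a b ha hb
    exact (hhcont.mono (uIcc_subset_Icc ha hb)).intervalIntegrable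
  have step1 : ∀ ε ∈ Ioc (0:ℝ) t,
      ∫ s in ε..t, h s = (t:ℂ) * G t - (ε:ℂ) * G ε := by
    intro ε hε
    have huIcc : uIcc ε t = Icc ε t := uIcc_of_le hε.2
    have hderiv : ∀ u ∈ uIcc ε t, HasDerivAt (fun u : ℝ => ((u:ℂ)) * G u) (h u) u := by
      intro u hu
      rw [huIcc] at hu
      have hupos : 0 < u := lt_of_lt_of_le hε.1 hu.1
      have hid : HasDerivAt (fun y : ℝ => ((y:ℂ))) 1 u := by
        simpa using (hasDerivAt_id ((u:ℂ))).comp_ofReal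
      have := hid.mul (hGt u hupos)
      refine this.congr_deriv ?_
      have huc : (u:ℂ) ≠ 0 := by exact_mod_cast ne_of_gt hupos
      rw [hhdef]
      simp only [hφdef, hg_eqG u (ne_of_gt hupos)]
      field_simp
      ring
    have hint : IntervalIntegrable h volume ε t :=
      hhint ε t ⟨le_of_lt hε.1, le_trans hε.2 ht.2⟩ ht
    have := intervalIntegral.integral_eq_sub_of_hasDerivAt hderiv hint
    rw [this]
  have lim1 : Tendsto (fun ε : ℝ => ∫ s in ε..t, h s) (𝓝[>] 0) (𝓝 (∫ s in (0:ℝ)..t, h s)) := by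
    have hsplit : ∀ ε ∈ Ioc (0:ℝ) t,
        (∫ s in ε..t, h s) = (∫ s in (0:ℝ)..t, h s) - ∫ s in (0:ℝ)..ε, h s := by
      intro ε hε
      rw [eq_sub_iff_add_eq]
      rw [add_comm]
      exact intervalIntegral.integral_add_adjacent_intervals
        (hhint 0 ε ⟨le_refl 0, zero_le_one⟩ ⟨le_of_lt hε.1, le_trans hε.2 ht.2⟩)
        (hhint ε t ⟨le_of_lt hε.1, le_trans hε.2 ht.2⟩ ht)
    obtain ⟨C, hC⟩ := (isCompact_Icc : IsCompact (Icc (0:ℝ) 1)).exists_bound_of_continuousOn hhcont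
    have hsmall : Tendsto (fun ε : ℝ => ∫ s in (0:ℝ)..ε, h s) (𝓝[>] 0) (𝓝 0) := by
      apply squeeze_zero_norm' (a := fun ε : ℝ => C * ε)
      · filter_upwards [Ioc_mem_nhdsGT_of_mem (show (0:ℝ) ∈ Ico (0:ℝ) 1 by norm_num)] with ε hε
        have : ‖∫ s in (0:ℝ)..ε, h s‖ ≤ C * |ε - 0| := by
          apply intervalIntegral.norm_integral_le_of_norm_le_const
          intro x hx
          rw [uIoc_of_le (le_of_lt hε.1)] at hx
          exact hC x ⟨le_of_lt hx.1, le_trans hx.2 hε.2⟩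
        rwa [sub_zero, abs_of_pos hε.1] at this
      · have : Tendsto (fun ε : ℝ => C * ε) (𝓝 0) (𝓝 (C * 0)) :=
          (tendsto_const_nhds.mul tendsto_id)
        rw [mul_zero] at this
        exact this.mono_left nhdsWithin_le_nhds
    have hconst : Tendsto (fun _ : ℝ => (∫ s in (0:ℝ)..t, h s)) (𝓝[>] (0:ℝ))
        (𝓝 (∫ s in (0:ℝ)..t, h s)) := tendsto_const_nhds
    have := hconst.sub hsmall
    rw [sub_zero] at this
    refine this.congr' ?_
    filter_upwards [Ioc_mem_nhdsGT_of_mem (show (0:ℝ) ∈ Ico (0:ℝ) t by simpa using htpos)] with ε hε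
    exact (hsplit ε hε).symm
  have lim2 : Tendsto (fun ε : ℝ => (t:ℂ) * G t - (ε:ℂ) * G ε) (𝓝[>] 0)
      (𝓝 ((t:ℂ) * G t)) := by
    have hε0 : Tendsto (fun ε : ℝ => ((ε:ℂ))) (𝓝[>] (0:ℝ)) (𝓝 0) := by
      have := Complex.continuous_ofReal.tendsto 0
      simpa using this.mono_left nhdsWithin_le_nhds
    have hconst : Tendsto (fun _ : ℝ => (t:ℂ) * G t) (𝓝[>] (0:ℝ))
        (𝓝 ((t:ℂ) * G t)) := tendsto_const_nhds
    have := hconst.sub (hε0.mul hGL)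
    simpa using this
  have key : (∫ s in (0:ℝ)..t, h s) = (t:ℂ) * G t := by
    refine tendsto_nhds_unique (lim1.congr' ?_) lim2
    filter_upwards [Ioc_mem_nhdsGT_of_mem (show (0:ℝ) ∈ Ico (0:ℝ) t by simpa using htpos)] with ε hε
    exact step1 ε hε
  have htc : (t:ℂ) ≠ 0 := by exact_mod_cast ne_of_gt htpos
  rw [cesaroFun, if_neg ht0, key, smul_eq_mul, ← mul_assoc, inv_mul_cancel₀ htc, one_mul,
    hhdef]
  simp [hg_eqG t ht0]


/-- For the Cesàro operator on `C[0,1]`: `f ∈ Ran(I − T)` iff `f(0) = 0` and the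
improper Riemann integral `∫_0^1 f(t)/t dt` exists. -/
theorem mem_range_one_sub_cesaro_interval (f : ℝ → ℂ)
    (hf : ContinuousOn f (Set.Icc 0 1)) :
    (∃ g : ℝ → ℂ, ContinuousOn g (Set.Icc 0 1) ∧
        ∀ t ∈ Set.Icc (0 : ℝ) 1, g t - cesaroFun g t = f t) ↔
      (f 0 = 0 ∧ ∃ L : ℂ,
        Tendsto (fun ε : ℝ => ∫ t in ε..1, f t / (t : ℂ))
          (nhdsWithin 0 (Set.Ioi 0)) (nhds L)) := by
  constructor
  · rintro ⟨g, hg, hge⟩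
    set gc : ℝ → ℂ := Set.IccExtend zero_le_one ((Set.Icc (0:ℝ) 1).restrict g) with hgcdef
    have hgc_cont : Continuous gc := hg.restrict.Icc_extend'
    have hgc_eq : ∀ t ∈ Set.Icc (0:ℝ) 1, gc t = g t := fun t ht =>
      Set.IccExtend_of_mem _ _ ht
    have hces : ∀ t ∈ Set.Icc (0:ℝ) 1, cesaroFun gc t = cesaroFun g t := by
      intro t ht
      by_cases ht0 : t = 0
      · subst ht0
        simp only [cesaroFun, if_pos rfl]
        exact hgc_eq 0 ⟨le_refl _, zero_le_one⟩
      · rw [cesaroFun, cesaroFun, if_neg ht0, if_neg ht0]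
        congr 1
        apply intervalIntegral.integral_congr
        intro s hs
        rw [Set.uIcc_of_le ht.1] at hs
        exact hgc_eq s ⟨hs.1, le_trans hs.2 ht.2⟩
    have hfe : ∀ t ∈ Set.Icc (0:ℝ) 1, gc t - cesaroFun gc t = f t := by
      intro t ht
      rw [hgc_eq t ht, hces t ht]
      exact hge t ht
    constructor
    · have h0 : (0:ℝ) ∈ Set.Icc (0:ℝ) 1 := ⟨le_refl _, zero_le_one⟩
      rw [← hfe 0 h0]
      simp [cesaroFun]
    · refine ⟨(∫ s in (0:ℝ)..1, gc s) - gc 0, ?_⟩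
      refine (forward_aux gc hgc_cont).congr' ?_
      filter_upwards [Ioc_mem_nhdsGT_of_mem
        (show (0:ℝ) ∈ Set.Ico (0:ℝ) 1 by norm_num)] with ε hε
      apply intervalIntegral.integral_congr
      intro s hs
      rw [Set.uIcc_of_le hε.2] at hs
      have hsmem : s ∈ Set.Icc (0:ℝ) 1 := ⟨le_trans (le_of_lt hε.1) hs.1, hs.2⟩
      simp only [hfe s hsmem]
  · rintro ⟨hf0, L, hL⟩
    set fc : ℝ → ℂ := Set.IccExtend zero_le_one ((Set.Icc (0:ℝ) 1).restrict f) with hfcdef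
    have hfc_cont : Continuous fc := hf.restrict.Icc_extend'
    have hfc_eq : ∀ t ∈ Set.Icc (0:ℝ) 1, fc t = f t := fun t ht =>
      Set.IccExtend_of_mem _ _ ht
    have hfc0 : fc 0 = 0 := by
      rw [hfc_eq 0 ⟨le_refl _, zero_le_one⟩]; exact hf0
    have hLc : Tendsto (fun ε : ℝ => ∫ t in ε..1, fc t / (t:ℂ)) (𝓝[>] 0) (𝓝 L) := by
      refine hL.congr' ?_
      filter_upwards [Ioc_mem_nhdsGT_of_mem
        (show (0:ℝ) ∈ Set.Ico (0:ℝ) 1 by norm_num)] with ε hε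
      apply intervalIntegral.integral_congr
      intro s hs
      rw [Set.uIcc_of_le hε.2] at hs
      have hsmem : s ∈ Set.Icc (0:ℝ) 1 := ⟨le_trans (le_of_lt hε.1) hs.1, hs.2⟩
      simp only [hfc_eq s hsmem]
    obtain ⟨h, hc, he⟩ := converse_aux fc hfc_cont hfc0 L hLc
    refine ⟨h, hc, fun t ht => ?_⟩
    rw [he t ht]
    exact hfc_eq t ht
end
end

section
/- Let T be the Cesàro operator on C[0,1] and P : C[0,1] → C[0,1] the operator (Pf)(t) = f(0). Then ‖Tⁿf − Pf‖_∞ → 0 as n → ∞ for every f ∈ C[0,1]. -/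
open Filter Topology MeasureTheory intervalIntegral

noncomputable section

namespace CesaroAux

lemma cesaro_zero (f : ℝ → ℂ) : cesaroFun f 0 = f 0 := by simp [cesaroFun]

lemma cesaro_apply_pos (f : ℝ → ℂ) {t : ℝ} (ht : t ≠ 0) :
    cesaroFun f t = (t : ℂ)⁻¹ • ∫ s in (0 : ℝ)..t, f s := by
  simp [cesaroFun, ht]

lemma norm_ofReal_inv (t : ℝ) : ‖((t : ℂ))⁻¹‖ = |t|⁻¹ := by
  rw [norm_inv]
  simp [Complex.norm_real]

/-- Key estimate: `‖t⁻¹ • ∫_0^t h‖ ≤ C` when `‖h‖ ≤ C` on `[0,1]`. -/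
lemma smul_integral_norm_le {h : ℝ → ℂ} {C : ℝ} {t : ℝ} (h0 : 0 < t) (ht1 : t ≤ 1)
    (hC : ∀ s ∈ Set.Icc (0:ℝ) 1, ‖h s‖ ≤ C) :
    ‖(t : ℂ)⁻¹ • ∫ s in (0 : ℝ)..t, h s‖ ≤ C := by
  have hb : ‖∫ s in (0 : ℝ)..t, h s‖ ≤ C * |t - 0| := by
    apply intervalIntegral.norm_integral_le_of_norm_le_const
    intro x hx
    rw [Set.uIoc_of_le h0.le] at hx
    exact hC x ⟨hx.1.le, hx.2.trans ht1⟩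
  rw [norm_smul, norm_ofReal_inv]
  have habs : |t| = t := abs_of_pos h0
  calc |t|⁻¹ * ‖∫ s in (0 : ℝ)..t, h s‖ ≤ |t|⁻¹ * (C * |t - 0|) := by
        apply mul_le_mul_of_nonneg_left hb (by positivity)
    _ = C := by
        rw [sub_zero, habs]
        field_simp

lemma cesaro_norm_le {f : ℝ → ℂ} {C : ℝ} (hC : ∀ s ∈ Set.Icc (0:ℝ) 1, ‖f s‖ ≤ C)
    {t : ℝ} (ht : t ∈ Set.Icc (0:ℝ) 1) : ‖cesaroFun f t‖ ≤ C := by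
  rcases eq_or_lt_of_le ht.1 with h0 | h0
  · rw [← h0, cesaro_zero]
    exact hC 0 (Set.left_mem_Icc.2 zero_le_one)
  · rw [cesaro_apply_pos f h0.ne']
    exact smul_integral_norm_le h0 ht.2 hC

lemma intervalIntegrable_of_integrableOn {f : ℝ → ℂ}
    (hf : IntegrableOn f (Set.Icc 0 1)) {t : ℝ} (ht : t ∈ Set.Icc (0:ℝ) 1) :
    IntervalIntegrable f volume 0 t := by
  rw [intervalIntegrable_iff]
  refine hf.mono_set ?_
  rw [Set.uIoc_of_le ht.1]
  exact Set.Ioc_subset_Icc_self.trans (Set.Icc_subset_Icc le_rfl ht.2)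

lemma cesaro_sub_norm_le {f g : ℝ → ℂ} {ε : ℝ}
    (hf : IntegrableOn f (Set.Icc 0 1)) (hg : IntegrableOn g (Set.Icc 0 1))
    (h : ∀ s ∈ Set.Icc (0:ℝ) 1, ‖f s - g s‖ ≤ ε)
    {t : ℝ} (ht : t ∈ Set.Icc (0:ℝ) 1) : ‖cesaroFun f t - cesaroFun g t‖ ≤ ε := by
  rcases eq_or_lt_of_le ht.1 with h0 | h0
  · rw [← h0, cesaro_zero, cesaro_zero]
    exact h 0 (Set.left_mem_Icc.2 zero_le_one)
  · rw [cesaro_apply_pos f h0.ne', cesaro_apply_pos g h0.ne', ← smul_sub,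
      ← intervalIntegral.integral_sub (intervalIntegrable_of_integrableOn hf ht)
        (intervalIntegrable_of_integrableOn hg ht)]
    exact smul_integral_norm_le h0 ht.2 h

lemma cesaro_integrableOn {f : ℝ → ℂ} {C : ℝ} (hf : IntegrableOn f (Set.Icc 0 1))
    (hC : ∀ s ∈ Set.Icc (0:ℝ) 1, ‖f s‖ ≤ C) :
    IntegrableOn (cesaroFun f) (Set.Icc 0 1) := by
  rw [integrableOn_Icc_iff_integrableOn_Ioc]
  set F : ℝ → ℂ := fun t => (t : ℂ)⁻¹ • ∫ s in (0 : ℝ)..t, f s with hF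
  have hFc : ContinuousOn F (Set.Ioc 0 1) := by
    have h1 : ContinuousOn (fun x : ℝ => ∫ s in (0:ℝ)..x, f s) (Set.Icc 0 1) := by
      have h2 := intervalIntegral.continuousOn_primitive_interval
        (a := 0) (b := 1) (μ := volume) (f := f)
        (by simpa [Set.uIcc_of_le (zero_le_one (α := ℝ))] using hf)
      simpa [Set.uIcc_of_le (zero_le_one (α := ℝ))] using h2
    refine ContinuousOn.smul (f := fun x : ℝ => (x : ℂ)⁻¹) ?_ (h1.mono Set.Ioc_subset_Icc_self)
    exact (Complex.continuous_ofReal.continuousOn).inv₀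
      fun x hx => Complex.ofReal_ne_zero.2 hx.1.ne'
  have hFi : IntegrableOn F (Set.Ioc 0 1) := by
    refine Integrable.mono' (g := fun _ => |C|)
      (integrableOn_const measure_Ioc_lt_top.ne)
      (hFc.aestronglyMeasurable measurableSet_Ioc) ?_
    refine (ae_restrict_iff' measurableSet_Ioc).2 (Eventually.of_forall fun x hx => ?_)
    exact smul_integral_norm_le hx.1 hx.2 fun s hs => (hC s hs).trans (le_abs_self C)
  exact hFi.congr_fun (fun x hx => (cesaro_apply_pos f hx.1.ne').symm) measurableSet_Ioc

lemma iter_bound {f : ℝ → ℂ} {C : ℝ} (hf : IntegrableOn f (Set.Icc 0 1))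
    (hC : ∀ s ∈ Set.Icc (0:ℝ) 1, ‖f s‖ ≤ C) (n : ℕ) :
    IntegrableOn (cesaroFun^[n] f) (Set.Icc 0 1) ∧
      ∀ s ∈ Set.Icc (0:ℝ) 1, ‖cesaroFun^[n] f s‖ ≤ C := by
  induction n with
  | zero => exact ⟨hf, hC⟩
  | succ n ih =>
    rw [Function.iterate_succ_apply']
    exact ⟨cesaro_integrableOn ih.1 ih.2, fun s hs => cesaro_norm_le ih.2 hs⟩

lemma iter_diff {f g : ℝ → ℂ} {Cf Cg ε : ℝ}
    (hf : IntegrableOn f (Set.Icc 0 1)) (hCf : ∀ s ∈ Set.Icc (0:ℝ) 1, ‖f s‖ ≤ Cf)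
    (hg : IntegrableOn g (Set.Icc 0 1)) (hCg : ∀ s ∈ Set.Icc (0:ℝ) 1, ‖g s‖ ≤ Cg)
    (h : ∀ s ∈ Set.Icc (0:ℝ) 1, ‖f s - g s‖ ≤ ε) (n : ℕ) :
    ∀ t ∈ Set.Icc (0:ℝ) 1, ‖cesaroFun^[n] f t - cesaroFun^[n] g t‖ ≤ ε := by
  induction n with
  | zero => exact h
  | succ n ih =>
    intro t ht
    rw [Function.iterate_succ_apply', Function.iterate_succ_apply']
    exact cesaro_sub_norm_le (iter_bound hf hCf n).1 (iter_bound hg hCg n).1 ih ht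

/-- A "polynomial" with complex coefficients evaluated at a real point. -/
def polysum (c : ℕ → ℂ) (m : ℕ) (t : ℝ) : ℂ := ∑ k ∈ Finset.range m, c k * (t : ℂ) ^ k

lemma polysum_continuous (c : ℕ → ℂ) (m : ℕ) : Continuous (polysum c m) :=
  continuous_finset_sum _ fun k _ => continuous_const.mul (Complex.continuous_ofReal.pow k)

lemma integral_monomial (c : ℂ) (k : ℕ) (t : ℝ) :
    ∫ s in (0:ℝ)..t, c * (s : ℂ) ^ k = c * (t : ℂ) ^ (k + 1) / ((k : ℂ) + 1) := by
  have h1 : (fun s : ℝ => ((s : ℂ)) ^ k) = fun s : ℝ => ((s ^ k : ℝ) : ℂ) := by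
    funext s; push_cast; ring
  rw [intervalIntegral.integral_const_mul, h1, intervalIntegral.integral_ofReal,
    integral_pow]
  rw [zero_pow (Nat.succ_ne_zero k), sub_zero]
  push_cast
  ring

lemma cesaro_polysum (c : ℕ → ℂ) (m : ℕ) :
    cesaroFun (polysum c m) = polysum (fun k => c k / ((k : ℂ) + 1)) m := by
  funext t
  rcases eq_or_ne t 0 with rfl | ht
  · rw [cesaro_zero]
    unfold polysum
    refine Finset.sum_congr rfl fun k _ => ?_
    rcases Nat.eq_zero_or_pos k with rfl | hk
    · norm_num
    · rw [Complex.ofReal_zero, zero_pow hk.ne', mul_zero, mul_zero]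
  · rw [cesaro_apply_pos _ ht]
    unfold polysum
    rw [intervalIntegral.integral_finset_sum]
    · rw [Finset.smul_sum]
      refine Finset.sum_congr rfl fun k _ => ?_
      rw [integral_monomial, smul_eq_mul]
      have htc : (t : ℂ) ≠ 0 := Complex.ofReal_ne_zero.2 ht
      have hk : ((k : ℂ) + 1) ≠ 0 := Nat.cast_add_one_ne_zero k
      rw [pow_succ]
      field_simp
    · intro k _
      exact (continuous_const.mul (Complex.continuous_ofReal.pow k)).intervalIntegrable 0 t

lemma cesaro_iterate_polysum (c : ℕ → ℂ) (m n : ℕ) :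
    cesaroFun^[n] (polysum c m) = polysum (fun k => c k / ((k : ℂ) + 1) ^ n) m := by
  induction n with
  | zero => funext t; simp [polysum]
  | succ n ih =>
    rw [Function.iterate_succ_apply', ih, cesaro_polysum]
    funext t
    unfold polysum
    refine Finset.sum_congr rfl fun k _ => ?_
    show c k / ((k : ℂ) + 1) ^ n / ((k : ℂ) + 1) * (t : ℂ) ^ k
      = c k / ((k : ℂ) + 1) ^ (n + 1) * (t : ℂ) ^ k
    rw [div_div, ← pow_succ]

lemma polysum_iter_bound (c : ℕ → ℂ) (m n : ℕ) {t : ℝ} (ht : t ∈ Set.Icc (0:ℝ) 1) :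
    ‖polysum (fun k => c k / ((k : ℂ) + 1) ^ n) m t - polysum c m 0‖ ≤
      (∑ k ∈ Finset.range m, ‖c k‖) * (1/2 : ℝ) ^ n := by
  unfold polysum
  rw [← Finset.sum_sub_distrib]
  refine (norm_sum_le _ _).trans ?_
  rw [Finset.sum_mul]
  refine Finset.sum_le_sum fun k _ => ?_
  rcases Nat.eq_zero_or_pos k with rfl | hk
  · simp only [Complex.ofReal_zero, Nat.cast_zero, zero_add, one_pow, div_one, pow_zero,
      mul_one, sub_self, norm_zero]
    positivity
  · rw [Complex.ofReal_zero, zero_pow hk.ne', mul_zero, sub_zero, norm_mul, norm_div,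
      norm_pow, norm_pow]
    have hnk : ‖(k : ℂ) + 1‖ = (k : ℝ) + 1 := by
      have : ((k : ℂ) + 1) = ((k + 1 : ℕ) : ℂ) := by push_cast; ring
      rw [this, Complex.norm_natCast]
      push_cast; ring
    have hnt : ‖((t : ℂ))‖ = t := by
      rw [Complex.norm_real, Real.norm_eq_abs, abs_of_nonneg ht.1]
    rw [hnk, hnt]
    have h2k : (2 : ℝ) ≤ (k : ℝ) + 1 := by
      have : (1 : ℝ) ≤ (k : ℝ) := by exact_mod_cast hk
      linarith
    have hle1 : t ^ k ≤ 1 := pow_le_one₀ ht.1 ht.2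
    have htk : 0 ≤ t ^ k := pow_nonneg ht.1 k
    have hkey : ‖c k‖ / ((k : ℝ) + 1) ^ n ≤ ‖c k‖ / (2 : ℝ) ^ n := by
      gcongr
    calc ‖c k‖ / ((k : ℝ) + 1) ^ n * t ^ k
        ≤ ‖c k‖ / (2 : ℝ) ^ n * 1 := mul_le_mul hkey hle1 htk (by positivity)
      _ = ‖c k‖ * (1/2 : ℝ) ^ n := by
          rw [mul_one, div_eq_mul_inv, one_div, inv_pow]

lemma exists_polysum_near (f : ℝ → ℂ) (hf : ContinuousOn f (Set.Icc 0 1)) {ε : ℝ}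
    (hε : 0 < ε) :
    ∃ m c, ∀ t ∈ Set.Icc (0:ℝ) 1, ‖f t - polysum c m t‖ ≤ ε := by
  obtain ⟨p, hp⟩ := exists_polynomial_near_of_continuousOn 0 1 (fun t => (f t).re)
    (Complex.continuous_re.comp_continuousOn hf) (ε/2) (by positivity)
  obtain ⟨q, hq⟩ := exists_polynomial_near_of_continuousOn 0 1 (fun t => (f t).im)
    (Complex.continuous_im.comp_continuousOn hf) (ε/2) (by positivity)
  set m := max p.natDegree q.natDegree + 1 with hm
  refine ⟨m, fun k => ((p.coeff k : ℝ) : ℂ) + ((q.coeff k : ℝ) : ℂ) * Complex.I,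
    fun t ht => ?_⟩
  have hps : polysum (fun k => ((p.coeff k : ℝ) : ℂ) + ((q.coeff k : ℝ) : ℂ) * Complex.I) m t
      = ((p.eval t : ℝ) : ℂ) + ((q.eval t : ℝ) : ℂ) * Complex.I := by
    unfold polysum
    rw [Polynomial.eval_eq_sum_range' (Nat.lt_succ_of_le (le_max_left _ _)),
      Polynomial.eval_eq_sum_range' (Nat.lt_succ_of_le (le_max_right _ _))]
    push_cast
    rw [Finset.sum_mul, ← Finset.sum_add_distrib]
    refine Finset.sum_congr rfl fun k _ => ?_
    ring
  rw [hps]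
  set z : ℂ := f t - (((p.eval t : ℝ) : ℂ) + ((q.eval t : ℝ) : ℂ) * Complex.I) with hz
  have hre : z.re = (f t).re - p.eval t := by simp [hz]
  have him : z.im = (f t).im - q.eval t := by simp [hz]
  calc ‖z‖ ≤ |z.re| + |z.im| := Complex.norm_le_abs_re_add_abs_im z
    _ ≤ ε/2 + ε/2 := by
        rw [hre, him, abs_sub_comm ((f t).re), abs_sub_comm ((f t).im)]
        exact add_le_add (hp t ht).le (hq t ht).le
    _ = ε := by ring

end CesaroAux

open CesaroAux in
/-- For every `f ∈ C[0,1]`, `‖Tⁿf − Pf‖_∞ → 0` where `(Pf)(t) = f(0)`. -/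
theorem cesaro_orbit_tendsto_interval (f : ℝ → ℂ)
    (hf : ContinuousOn f (Set.Icc 0 1)) :
    Tendsto (fun n : ℕ => ⨆ t : Set.Icc (0 : ℝ) 1, ‖cesaroFun^[n] f t - f 0‖)
      atTop (nhds 0) := by
  have hne : Nonempty (Set.Icc (0:ℝ) 1) := ⟨⟨0, le_refl 0, zero_le_one⟩⟩
  rw [Metric.tendsto_atTop]
  intro ε hε
  obtain ⟨m, c, hmc⟩ := exists_polysum_near f hf (ε := ε/4) (by positivity)
  set p : ℝ → ℂ := polysum c m with hpdef
  set B := ∑ k ∈ Finset.range m, ‖c k‖ with hB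
  have hBt : Tendsto (fun n : ℕ => B * (1/2 : ℝ) ^ n) atTop (nhds 0) := by
    have := (tendsto_pow_atTop_nhds_zero_of_lt_one (by norm_num : (0:ℝ) ≤ 1/2)
      (by norm_num : (1/2 : ℝ) < 1)).const_mul B
    simpa using this
  obtain ⟨N, hN⟩ := Filter.eventually_atTop.1 (hBt.eventually_lt_const (by positivity :
    (0:ℝ) < ε/4))
  refine ⟨N, fun n hn => ?_⟩
  have hfi : IntegrableOn f (Set.Icc 0 1) := hf.integrableOn_Icc
  obtain ⟨Cf, hCf⟩ := isCompact_Icc.exists_bound_of_continuousOn hf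
  have hpi : IntegrableOn p (Set.Icc 0 1) :=
    (polysum_continuous c m).continuousOn.integrableOn_Icc
  obtain ⟨Cp, hCp⟩ := isCompact_Icc.exists_bound_of_continuousOn
    (polysum_continuous c m).continuousOn
  have key : ∀ t ∈ Set.Icc (0:ℝ) 1, ‖cesaroFun^[n] f t - f 0‖ ≤ ε/4 + ε/4 + ε/4 := by
    intro t ht
    have h1 : ‖cesaroFun^[n] f t - cesaroFun^[n] p t‖ ≤ ε/4 :=
      iter_diff hfi hCf hpi hCp hmc n t ht
    have h2 : ‖cesaroFun^[n] p t - p 0‖ ≤ ε/4 := by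
      rw [hpdef, cesaro_iterate_polysum]
      exact (polysum_iter_bound c m n ht).trans (hN n hn).le
    have h3 : ‖p 0 - f 0‖ ≤ ε/4 := by
      rw [norm_sub_rev]
      exact hmc 0 (Set.left_mem_Icc.2 zero_le_one)
    calc ‖cesaroFun^[n] f t - f 0‖
        = ‖(cesaroFun^[n] f t - cesaroFun^[n] p t) + (cesaroFun^[n] p t - p 0)
            + (p 0 - f 0)‖ := by congr 1; ring
      _ ≤ ‖cesaroFun^[n] f t - cesaroFun^[n] p t‖ + ‖cesaroFun^[n] p t - p 0‖
            + ‖p 0 - f 0‖ := norm_add₃_le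
      _ ≤ ε/4 + ε/4 + ε/4 := by linarith
  have hS0 : 0 ≤ ⨆ t : Set.Icc (0 : ℝ) 1, ‖cesaroFun^[n] f t - f 0‖ :=
    Real.iSup_nonneg fun t => norm_nonneg _
  rw [Real.dist_eq, sub_zero, abs_of_nonneg hS0]
  have hSle : (⨆ t : Set.Icc (0 : ℝ) 1, ‖cesaroFun^[n] f t - f 0‖) ≤ ε/4 + ε/4 + ε/4 :=
    ciSup_le fun t => key t t.2
  linarith
end
end

section
/- Let T be the Cesàro operator on C[0,1]. For every f ∈ C[0,1], t ∈ [0,1] and n ≥ 1, (Tⁿf)(t) = (1/(n−1)!) ∫_0^1 log(1/s)^{n−1} f(st) ds. -/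
open Filter Topology MeasureTheory intervalIntegral

noncomputable section

section CesaroAux
open Set


private lemma expNeg_deriv : ∀ x ∈ Set.Ioi (0:ℝ),
    HasDerivWithinAt (fun x : ℝ => Real.exp (-x)) (-Real.exp (-x)) (Set.Ioi 0) x := by
  intro x _
  simpa [mul_neg_one, Function.comp_def] using
    ((Real.hasDerivAt_exp (-x)).comp x (hasDerivAt_neg x)).hasDerivWithinAt

private lemma expNeg_inj : Set.InjOn (fun x : ℝ => Real.exp (-x)) (Set.Ioi 0) :=
  fun _ _ _ _ h => neg_injective (Real.exp_injective h)

private lemma expNeg_image : (fun x : ℝ => Real.exp (-x)) '' Set.Ioi 0 = Set.Ioo 0 1 := by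
  ext y
  constructor
  · rintro ⟨x, hx, rfl⟩
    exact ⟨Real.exp_pos _, Real.exp_lt_one_iff.2 (neg_lt_zero.2 hx)⟩
  · rintro ⟨h0, h1⟩
    exact ⟨-Real.log y, by simpa using Real.log_neg h0 h1, by simp [Real.exp_log h0]⟩

private lemma expNeg_eq (m : ℕ) : ∀ x ∈ Set.Ioi (0:ℝ),
    Real.exp (-x) * x ^ (((m:ℝ) + 1) - 1)
      = |(-Real.exp (-x))| • (-Real.log (Real.exp (-x))) ^ m := by
  intro x _
  rw [Real.log_exp, neg_neg, abs_neg, abs_of_pos (Real.exp_pos _), smul_eq_mul,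
    show ((m:ℝ) + 1) - 1 = (m:ℝ) by ring, Real.rpow_natCast]

lemma integrableOn_neg_log_pow (m : ℕ) :
    IntegrableOn (fun u : ℝ => (-Real.log u) ^ m) (Set.Ioo 0 1) := by
  rw [← expNeg_image,
    integrableOn_image_iff_integrableOn_abs_deriv_smul measurableSet_Ioi expNeg_deriv expNeg_inj]
  exact (Real.GammaIntegral_convergent (show (0:ℝ) < (m:ℝ) + 1 by positivity)).congr_fun
    (expNeg_eq m) measurableSet_Ioi

lemma integral_neg_log_pow (m : ℕ) :
    ∫ u in (0:ℝ)..1, (-Real.log u) ^ m = m.factorial := by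
  rw [intervalIntegral.integral_of_le zero_le_one, MeasureTheory.integral_Ioc_eq_integral_Ioo,
    ← expNeg_image,
    integral_image_eq_integral_abs_deriv_smul measurableSet_Ioi expNeg_deriv expNeg_inj,
    ← setIntegral_congr_fun measurableSet_Ioi (expNeg_eq m),
    ← Real.Gamma_eq_integral (show (0:ℝ) < (m:ℝ) + 1 by positivity)]
  exact_mod_cast Real.Gamma_nat_eq_factorial m


lemma intervalIntegrable_neg_log_pow (m : ℕ) :
    IntervalIntegrable (fun u : ℝ => (-Real.log u) ^ m) volume 0 1 := by
  rw [intervalIntegrable_iff_integrableOn_Ioc_of_le zero_le_one,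
    integrableOn_Ioc_iff_integrableOn_Ioo]
  exact integrableOn_neg_log_pow m

lemma intervalIntegrable_neg_log_pow_smul (m : ℕ) {φ : ℝ → ℂ} {M : ℝ}
    (hφ : AEStronglyMeasurable φ (volume.restrict (Set.Ioc 0 1)))
    (hM : ∀ u ∈ Set.Ioc (0:ℝ) 1, ‖φ u‖ ≤ M) :
    IntervalIntegrable (fun u : ℝ => ((-Real.log u : ℝ) : ℂ) ^ m * φ u) volume 0 1 := by
  rw [intervalIntegrable_iff_integrableOn_Ioc_of_le zero_le_one]
  have hbound : IntegrableOn (fun u : ℝ => (-Real.log u) ^ m * M) (Set.Ioc 0 1) := by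
    rw [integrableOn_Ioc_iff_integrableOn_Ioo]
    exact (integrableOn_neg_log_pow m).mul_const M
  have hmeas : Measurable fun u : ℝ => ((-Real.log u : ℝ) : ℂ) ^ m :=
    (Complex.measurable_ofReal.comp (Real.measurable_log.neg)).pow_const m
  refine Integrable.mono' hbound (hmeas.aestronglyMeasurable.mul hφ) ?_
  refine (ae_restrict_iff' measurableSet_Ioc).2 (Eventually.of_forall fun u hu => ?_)
  have h0 : 0 ≤ -Real.log u := by
    simpa using Real.log_nonpos (le_of_lt hu.1) hu.2
  calc ‖((-Real.log u : ℝ) : ℂ) ^ m * φ u‖ = (-Real.log u) ^ m * ‖φ u‖ := by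
        rw [norm_mul, norm_pow, Complex.norm_real, Real.norm_eq_abs, abs_of_nonneg h0]
    _ ≤ (-Real.log u) ^ m * M := mul_le_mul_of_nonneg_left (hM u hu) (by positivity)

lemma Icc_mem_nhdsGT' : Set.Icc (0:ℝ) 1 ∈ nhdsWithin (0:ℝ) (Set.Ioi 0) := by
  have h := inter_mem (mem_nhdsWithin_of_mem_nhds (Iio_mem_nhds one_pos))
    (self_mem_nhdsWithin (s := Set.Ioi (0:ℝ)) (a := (0:ℝ)))
  exact mem_of_superset h fun x hx => ⟨le_of_lt hx.2, le_of_lt hx.1⟩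

lemma tendsto_integral_from {g : ℝ → ℂ} (hg : IntervalIntegrable g volume 0 1) :
    Tendsto (fun ε => ∫ u in ε..1, g u) (nhdsWithin 0 (Set.Ioi 0))
      (nhds (∫ u in (0:ℝ)..1, g u)) := by
  have h1 : Tendsto (fun ε => ∫ u in (0:ℝ)..ε, g u) (nhdsWithin 0 (Set.Ioi 0))
      (nhds (∫ u in (0:ℝ)..(0:ℝ), g u)) := by
    have := intervalIntegral.continuousWithinAt_primitive (μ := volume)
      (f := g) (a := 0) (b₁ := 0) (b₂ := 1) (b₀ := 0) (by simp) ?_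
    · exact this.tendsto.mono_left (nhdsWithin_le_iff.2 Icc_mem_nhdsGT')
    · simpa using hg
  have h2 : (fun ε => (∫ u in (0:ℝ)..1, g u) - ∫ u in (0:ℝ)..ε, g u)
      =ᶠ[nhdsWithin (0:ℝ) (Set.Ioi 0)] (fun ε => ∫ u in ε..1, g u) := by
    filter_upwards [Icc_mem_nhdsGT'] with ε hε
    have ha : IntervalIntegrable g volume 0 ε :=
      hg.mono_set (by rw [Set.uIcc_of_le hε.1, Set.uIcc_of_le zero_le_one]
                      exact Set.Icc_subset_Icc le_rfl hε.2)
    have hb : IntervalIntegrable g volume ε 1 :=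
      hg.mono_set (by rw [Set.uIcc_of_le hε.2, Set.uIcc_of_le zero_le_one]
                      exact Set.Icc_subset_Icc hε.1 le_rfl)
    rw [eq_comm, eq_sub_iff_add_eq, add_comm]
    exact intervalIntegral.integral_add_adjacent_intervals ha hb
  have h3 := (tendsto_const_nhds (x := ∫ u in (0:ℝ)..1, g u)
    (f := nhdsWithin (0:ℝ) (Set.Ioi 0))).sub h1
  simp only [intervalIntegral.integral_same, sub_zero] at h3
  exact h3.congr' h2


lemma tendsto_neg_log_pow_mul (m : ℕ) :
    Tendsto (fun x : ℝ => (-Real.log x) ^ (m+1) * x) (nhdsWithin 0 (Set.Ioi 0)) (nhds 0) := by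
  have hr : (0:ℝ) < 1 / (m+1) := by positivity
  have h0 := tendsto_log_mul_rpow_nhdsGT_zero hr
  have h1 : Tendsto (fun x : ℝ => -Real.log x * x ^ ((1:ℝ)/(m+1)))
      (nhdsWithin 0 (Set.Ioi 0)) (nhds 0) := by
    simpa using h0.neg
  have h2 := h1.pow (m+1)
  simp only [zero_pow (Nat.succ_ne_zero m)] at h2
  refine h2.congr' ?_
  filter_upwards [self_mem_nhdsWithin] with x hx
  have hx' : (0:ℝ) < x := hx
  rw [mul_pow, ← Real.rpow_natCast (x ^ ((1:ℝ)/(m+1))) (m+1), ← Real.rpow_mul hx'.le,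
    show (1:ℝ)/((m:ℝ)+1) * ((m+1 : ℕ):ℝ) = 1 by push_cast; field_simp, Real.rpow_one]


lemma continuous_cesaroFun {f : ℝ → ℂ} (hf : Continuous f) : Continuous (cesaroFun f) := by
  rw [continuous_iff_continuousAt]
  intro t₀
  rcases eq_or_ne t₀ 0 with rfl | ht₀
  · -- continuity at 0
    rw [ContinuousAt, show cesaroFun f 0 = f 0 by simp [cesaroFun]]
    rw [Metric.tendsto_nhds_nhds]
    intro ε hε
    obtain ⟨δ, hδ, hδ'⟩ := Metric.continuousAt_iff.1 hf.continuousAt (ε/2) (by positivity)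
    refine ⟨δ, hδ, fun {t} hts => ?_⟩
    rcases eq_or_ne t 0 with rfl | ht
    · simpa [cesaroFun] using hε
    · have htc : ((t:ℝ):ℂ) ≠ 0 := by exact_mod_cast ht
      have key : cesaroFun f t - f 0 = (t : ℂ)⁻¹ • ∫ s in (0:ℝ)..t, (f s - f 0) := by
        rw [intervalIntegral.integral_sub (hf.intervalIntegrable 0 t)
          (intervalIntegrable_const), intervalIntegral.integral_const, cesaroFun, if_neg ht,
          smul_sub, sub_zero]
        congr 1
        simp [Complex.real_smul, smul_eq_mul, ← mul_assoc, inv_mul_cancel₀ htc]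
      have hbound : ‖∫ s in (0:ℝ)..t, (f s - f 0)‖ ≤ (ε/2) * |t - 0| := by
        apply intervalIntegral.norm_integral_le_of_norm_le_const
        intro x hx
        have hxt : |x| ≤ |t| := by
          rcases le_or_gt 0 t with h | h
          · rw [Set.uIoc_of_le (by linarith : (0:ℝ) ≤ t)] at hx
            rw [abs_of_pos hx.1, abs_of_nonneg (le_of_lt (lt_of_lt_of_le hx.1 hx.2))]
            exact hx.2
          · rw [Set.uIoc_of_ge (by linarith : t ≤ (0:ℝ))] at hx
            rw [abs_of_nonpos hx.2, abs_of_neg h]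
            linarith [hx.1]
        have : dist x 0 < δ := by
          rw [Real.dist_eq, sub_zero]
          calc |x| ≤ |t| := hxt
            _ < δ := by simpa [Real.dist_eq] using hts
        rw [← dist_eq_norm]
        exact le_of_lt (hδ' this)
      rw [dist_eq_norm, key, norm_smul]
      have htn : ‖((t:ℝ):ℂ)⁻¹‖ = |t|⁻¹ := by
        rw [norm_inv, Complex.norm_real, Real.norm_eq_abs]
      rw [htn]
      calc |t|⁻¹ * ‖∫ s in (0:ℝ)..t, (f s - f 0)‖ ≤ |t|⁻¹ * ((ε/2) * |t|) := by
            apply mul_le_mul_of_nonneg_left _ (by positivity)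
            simpa using hbound
        _ = ε/2 := by
            rw [mul_comm (ε/2), ← mul_assoc, inv_mul_cancel₀ (abs_ne_zero.2 ht), one_mul]
        _ < ε := by linarith
  · have hev : (fun t => (t : ℂ)⁻¹ • ∫ s in (0:ℝ)..t, f s) =ᶠ[nhds t₀] cesaroFun f := by
      filter_upwards [eventually_ne_nhds ht₀] with t ht
      simp [cesaroFun, if_neg ht]
    refine ContinuousAt.congr ?_ hev
    exact ((Complex.continuous_ofReal.continuousAt.inv₀ (by exact_mod_cast ht₀)).smul
      ((intervalIntegral.continuous_primitive (fun a b => hf.intervalIntegrable a b) 0).continuousAt))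


lemma cesaro_key {f : ℝ → ℂ} (hf : Continuous f) {t : ℝ} (ht0 : 0 < t) (ht1 : t ≤ 1) (m : ℕ) :
    ∫ u in (0:ℝ)..1, ((-Real.log u : ℝ):ℂ)^m * cesaroFun f (u*t)
      = (((m:ℝ)+1))⁻¹ • ∫ u in (0:ℝ)..1, ((-Real.log u : ℝ):ℂ)^(m+1) * f (u*t) := by
  have htne : t ≠ 0 := ne_of_gt ht0
  have htc : ((t:ℝ):ℂ) ≠ 0 := by exact_mod_cast htne
  set g := cesaroFun f with hgdef
  have hg : Continuous g := continuous_cesaroFun hf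
  -- bounds
  obtain ⟨M, hM⟩ := (isCompact_Icc (a := (0:ℝ)) (b := 1)).exists_bound_of_continuousOn
    hf.continuousOn
  obtain ⟨Mg, hMg⟩ := (isCompact_Icc (a := (0:ℝ)) (b := 1)).exists_bound_of_continuousOn
    hg.continuousOn
  have hmem : ∀ u ∈ Set.Ioc (0:ℝ) 1, u * t ∈ Set.Icc (0:ℝ) 1 := fun u hu =>
    ⟨mul_nonneg hu.1.le ht0.le, mul_le_one₀ hu.2 ht0.le ht1⟩
  -- integrability
  have hφ : IntervalIntegrable (fun u : ℝ => ((-Real.log u : ℝ):ℂ)^m * g (u*t)) volume 0 1 :=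
    intervalIntegrable_neg_log_pow_smul m
      ((hg.comp (continuous_id.mul continuous_const)).aestronglyMeasurable)
      (fun u hu => hMg _ (hmem u hu))
  have hψ : IntervalIntegrable (fun u : ℝ => ((-Real.log u : ℝ):ℂ)^(m+1) * f (u*t)) volume 0 1 :=
    intervalIntegrable_neg_log_pow_smul (m+1)
      ((hf.comp (continuous_id.mul continuous_const)).aestronglyMeasurable)
      (fun u hu => hM _ (hmem u hu))
  -- primitive
  set F : ℝ → ℂ := fun y => ∫ s in (0:ℝ)..y, f s with hFdef
  have hF : ∀ y, HasDerivAt F (f y) y := fun y =>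
    intervalIntegral.integral_hasDerivAt_right (hf.intervalIntegrable 0 y)
      (hf.stronglyMeasurable.stronglyMeasurableAtFilter) hf.continuousAt
  set B : ℝ → ℂ := fun x => ((t:ℝ):ℂ)⁻¹ * F (x*t) with hBdef
  have hB : ∀ x, HasDerivAt B (f (x*t)) x := by
    intro x
    have h1 : HasDerivAt (fun x : ℝ => F (x*t)) (t • f (x*t)) x := by
      have := (hF (x*t)).scomp x ((hasDerivAt_id x).mul_const t)
      simpa [Function.comp_def] using this
    have h2 := h1.const_mul (((t:ℝ):ℂ)⁻¹)
    have : ((t:ℝ):ℂ)⁻¹ * (t • f (x*t)) = f (x*t) := by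
      rw [Complex.real_smul, ← mul_assoc, inv_mul_cancel₀ htc, one_mul]
    rw [this] at h2
    exact h2
  have hBg : ∀ x : ℝ, 0 < x → ((x:ℝ):ℂ)⁻¹ * B x = g (x*t) := by
    intro x hx
    have hxt : x * t ≠ 0 := by positivity
    rw [hgdef, cesaroFun, if_neg hxt, hBdef]
    push_cast
    rw [smul_eq_mul, ← mul_assoc, ← mul_inv]
  -- IBP identity for each ε ∈ (0,1)
  have hIBP : ∀ ε ∈ Set.Ioo (0:ℝ) 1,
      (∫ u in ε..1, ((-Real.log u : ℝ):ℂ)^(m+1) * f (u*t))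
        = -(((-Real.log ε : ℝ):ℂ)^(m+1) * B ε)
          + (((m:ℝ)+1):ℂ) * ∫ u in ε..1, ((-Real.log u : ℝ):ℂ)^m * g (u*t) := by
    intro ε hε
    have hεIcc : Set.uIcc ε 1 = Set.Icc ε 1 := Set.uIcc_of_le hε.2.le
    have hpos : ∀ x ∈ Set.uIcc ε 1, 0 < x := by
      intro x hx
      rw [hεIcc] at hx
      exact lt_of_lt_of_le hε.1 hx.1
    -- derivative of u
    have hu' : ∀ x ∈ Set.Ioo (min ε 1) (max ε 1),
        HasDerivAt (fun x : ℝ => ((-Real.log x : ℝ):ℂ)^(m+1))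
          ((((m+1:ℕ) * (-Real.log x)^m * (-x⁻¹) : ℝ)):ℂ) x := by
      intro x hx
      rw [min_eq_left hε.2.le, max_eq_right hε.2.le] at hx
      have hx0 : x ≠ 0 := ne_of_gt (lt_trans hε.1 hx.1)
      have h1 : HasDerivAt (fun x : ℝ => (-Real.log x)^(m+1))
          ((m+1:ℕ) * (-Real.log x)^m * (-x⁻¹)) x := by
        have := ((Real.hasDerivAt_log hx0).neg).pow (m+1)
        exact this.congr_deriv (by simp)
      have := h1.ofReal_comp
      simpa using this
    -- continuity of u on the interval
    have hucont : ContinuousOn (fun x : ℝ => ((-Real.log x : ℝ):ℂ)^(m+1)) (Set.uIcc ε 1) := by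
      intro x hx
      have hx0 : x ≠ 0 := ne_of_gt (hpos x hx)
      exact (Complex.continuous_ofReal.continuousAt.comp
        ((Real.continuousAt_log hx0).neg)).continuousWithinAt.pow _
    have hu'int : IntervalIntegrable
        (fun x : ℝ => ((((m+1:ℕ) * (-Real.log x)^m * (-x⁻¹) : ℝ)):ℂ)) volume ε 1 := by
      apply ContinuousOn.intervalIntegrable
      intro x hx
      have hx0 : x ≠ 0 := ne_of_gt (hpos x hx)
      apply Complex.continuous_ofReal.continuousAt.comp_continuousWithinAt
      exact (((continuousAt_const.mul
        (((Real.continuousAt_log hx0).neg).pow m)).mul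
        ((continuousAt_inv₀ hx0).neg)).continuousWithinAt)
    have hBcont : ContinuousOn B (Set.uIcc ε 1) :=
      (continuous_const.mul ((intervalIntegral.continuous_primitive
        (fun a b => hf.intervalIntegrable a b) 0).comp
        (continuous_id.mul continuous_const))).continuousOn
    have hv'int : IntervalIntegrable (fun x : ℝ => f (x*t)) volume ε 1 :=
      ((hf.comp (continuous_id.mul continuous_const)).continuousOn).intervalIntegrable
    have := intervalIntegral.integral_mul_deriv_eq_deriv_mul_of_hasDerivAt
      (u := fun x : ℝ => ((-Real.log x : ℝ):ℂ)^(m+1))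
      (v := B)
      (u' := fun x : ℝ => ((((m+1:ℕ) * (-Real.log x)^m * (-x⁻¹) : ℝ)):ℂ))
      (v' := fun x : ℝ => f (x*t))
      hucont hBcont hu' (fun x _ => hB x) hu'int hv'int
    rw [this]
    simp only [Real.log_one, neg_zero, Complex.ofReal_zero, zero_pow (Nat.succ_ne_zero m),
      zero_mul, zero_sub]
    have hlast : ∫ x in ε..1, ((((m+1:ℕ) * (-Real.log x)^m * (-x⁻¹) : ℝ)):ℂ) * B x
        = -((((m:ℝ)+1):ℂ) * ∫ u in ε..1, ((-Real.log u : ℝ):ℂ)^m * g (u*t)) := by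
      rw [← intervalIntegral.integral_const_mul, ← intervalIntegral.integral_neg]
      apply intervalIntegral.integral_congr
      intro x hx
      have hx0 : 0 < x := hpos x hx
      beta_reduce
      rw [← hBg x hx0]
      push_cast
      ring
    rw [hlast]
    ring
  -- limits as ε → 0⁺
  have hlim1 : Tendsto (fun ε => ∫ u in ε..1, ((-Real.log u : ℝ):ℂ)^(m+1) * f (u*t))
      (nhdsWithin 0 (Set.Ioi 0)) (nhds (∫ u in (0:ℝ)..1, ((-Real.log u : ℝ):ℂ)^(m+1) * f (u*t))) :=
    tendsto_integral_from hψ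
  have hlim2 : Tendsto (fun ε => -(((-Real.log ε : ℝ):ℂ)^(m+1) * B ε)
        + (((m:ℝ)+1):ℂ) * ∫ u in ε..1, ((-Real.log u : ℝ):ℂ)^m * g (u*t))
      (nhdsWithin 0 (Set.Ioi 0))
      (nhds (0 + (((m:ℝ)+1):ℂ) * ∫ u in (0:ℝ)..1, ((-Real.log u : ℝ):ℂ)^m * g (u*t))) := by
    apply Tendsto.add
    · rw [show (0:ℂ) = -0 by ring]
      apply Tendsto.neg
      apply squeeze_zero_norm' ?_ (show Tendsto (fun x : ℝ => (-Real.log x)^(m+1) * x * M)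
        (nhdsWithin 0 (Set.Ioi 0)) (nhds 0) by
          simpa using (tendsto_neg_log_pow_mul m).mul_const M)
      have hIoo : Set.Ioo (0:ℝ) 1 ∈ nhdsWithin (0:ℝ) (Set.Ioi 0) := by
        have h := inter_mem (mem_nhdsWithin_of_mem_nhds (Iio_mem_nhds one_pos))
          (self_mem_nhdsWithin (s := Set.Ioi (0:ℝ)) (a := (0:ℝ)))
        exact mem_of_superset h fun x hx => ⟨hx.2, hx.1⟩
      filter_upwards [hIoo] with ε hε
      have hε0 : (0:ℝ) < ε := hε.1
      have hlog : (0:ℝ) ≤ -Real.log ε := by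
        simpa using Real.log_nonpos hε0.le hε.2.le
      have hBε : ‖B ε‖ ≤ ε * M := by
        rw [hBdef]
        have hFb : ‖F (ε*t)‖ ≤ M * |ε*t - 0| := by
          apply intervalIntegral.norm_integral_le_of_norm_le_const
          intro x hx
          rw [Set.uIoc_of_le (by positivity : (0:ℝ) ≤ ε*t)] at hx
          refine hM x ⟨hx.1.le, le_trans hx.2 ?_⟩
          calc ε * t ≤ 1 * 1 := mul_le_mul hε.2.le ht1 ht0.le zero_le_one
            _ = 1 := by ring
        rw [norm_mul, norm_inv, Complex.norm_real, Real.norm_eq_abs, abs_of_pos ht0]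
        rw [sub_zero, abs_of_pos (by positivity : (0:ℝ) < ε*t)] at hFb
        calc t⁻¹ * ‖F (ε*t)‖ ≤ t⁻¹ * (M * (ε*t)) :=
              mul_le_mul_of_nonneg_left hFb (by positivity)
          _ = ε * M := by field_simp
        -- M ≥ 0 not needed here
      calc ‖((-Real.log ε : ℝ):ℂ)^(m+1) * B ε‖
            = (-Real.log ε)^(m+1) * ‖B ε‖ := by
            rw [norm_mul, norm_pow, Complex.norm_real, Real.norm_eq_abs, abs_of_nonneg hlog]
        _ ≤ (-Real.log ε)^(m+1) * (ε * M) := by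
            exact mul_le_mul_of_nonneg_left hBε (by positivity)
        _ = (-Real.log ε)^(m+1) * ε * M := by ring
    · exact (tendsto_integral_from hφ).const_mul _
  have hIoo : Set.Ioo (0:ℝ) 1 ∈ nhdsWithin (0:ℝ) (Set.Ioi 0) := by
    have h := inter_mem (mem_nhdsWithin_of_mem_nhds (Iio_mem_nhds one_pos))
      (self_mem_nhdsWithin (s := Set.Ioi (0:ℝ)) (a := (0:ℝ)))
    exact mem_of_superset h fun x hx => ⟨hx.2, hx.1⟩
  have heq : ∫ u in (0:ℝ)..1, ((-Real.log u : ℝ):ℂ)^(m+1) * f (u*t)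
      = (((m:ℝ)+1):ℂ) * ∫ u in (0:ℝ)..1, ((-Real.log u : ℝ):ℂ)^m * g (u*t) := by
    have := tendsto_nhds_unique hlim1 (hlim2.congr' ?_)
    · rw [this, zero_add]
    · filter_upwards [hIoo] with ε hε
      exact (hIBP ε hε).symm
  have hne : ((((m:ℕ):ℝ):ℂ) + 1) ≠ 0 := by
    have : ((m:ℝ)+1) ≠ 0 := by positivity
    exact_mod_cast this
  rw [heq, Complex.real_smul, Complex.ofReal_inv, ← mul_assoc]
  have hc : (((m:ℝ)+1 : ℝ):ℂ) = (((m:ℕ):ℝ):ℂ) + 1 := by push_cast; ring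
  rw [hc, inv_mul_cancel₀ hne, one_mul]


lemma integral_neg_log_pow_mul_const (m : ℕ) (c : ℂ) :
    ∫ u in (0:ℝ)..1, ((-Real.log u : ℝ):ℂ)^m * c = (m.factorial : ℝ) • c := by
  have : (fun u : ℝ => ((-Real.log u : ℝ):ℂ)^m * c)
      = fun u : ℝ => ((-Real.log u)^m : ℝ) • c := by
    funext u
    rw [Complex.real_smul, Complex.ofReal_pow]
  rw [this, intervalIntegral.integral_smul_const, integral_neg_log_pow]

lemma cesaro_core (m : ℕ) : ∀ (f : ℝ → ℂ), Continuous f → ∀ t ∈ Set.Icc (0:ℝ) 1,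
    cesaroFun^[m+1] f t
      = ((m.factorial : ℝ))⁻¹ • ∫ s in (0:ℝ)..1, ((-Real.log s : ℝ):ℂ) ^ m * f (s * t) := by
  induction m with
  | zero =>
    intro f hf t ht
    rw [zero_add, Function.iterate_one]
    simp only [Nat.factorial_zero, pow_zero, one_mul, Nat.cast_one, inv_one, one_smul]
    rcases eq_or_ne t 0 with rfl | htne
    · rw [show cesaroFun f 0 = f 0 by simp [cesaroFun]]
      simp only [mul_zero]
      simp
    · have ht0 : 0 < t := lt_of_le_of_ne ht.1 (Ne.symm htne)
      simp only [cesaroFun, if_neg htne]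
      rw [intervalIntegral.integral_comp_mul_right (fun s => f s) htne]
      simp only [zero_mul, one_mul]
      rw [Complex.real_smul, Complex.ofReal_inv, smul_eq_mul]
  | succ m ih =>
    intro f hf t ht
    rw [Function.iterate_succ_apply]
    have hg : Continuous (cesaroFun f) := continuous_cesaroFun hf
    rw [ih (cesaroFun f) hg t ht]
    rcases eq_or_ne t 0 with rfl | htne
    · have hc0 : ∀ s : ℝ, cesaroFun f (s * 0) = f 0 := by
        intro s; simp [cesaroFun]
      have hc1 : ∀ s : ℝ, f (s * 0) = f 0 := by intro s; rw [mul_zero]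
      simp only [hc0, hc1]
      rw [integral_neg_log_pow_mul_const, integral_neg_log_pow_mul_const]
      rw [smul_smul, smul_smul]
      congr 1
      rw [inv_mul_cancel₀ (by exact_mod_cast m.factorial_ne_zero),
        inv_mul_cancel₀ (by exact_mod_cast (m+1).factorial_ne_zero)]
    · have ht0 : 0 < t := lt_of_le_of_ne ht.1 (Ne.symm htne)
      rw [cesaro_key hf ht0 ht.2 m, smul_smul]
      congr 1
      rw [Nat.factorial_succ]
      push_cast
      rw [mul_inv]
      ring


lemma cesaroIter_congr : ∀ (n : ℕ) {f g : ℝ → ℂ}, Set.EqOn f g (Set.Icc 0 1) →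
    Set.EqOn (cesaroFun^[n] f) (cesaroFun^[n] g) (Set.Icc 0 1) := by
  intro n
  induction n with
  | zero => intro f g h; simpa using h
  | succ n ih =>
    intro f g h
    rw [Function.iterate_succ_apply, Function.iterate_succ_apply]
    apply ih
    intro t ht
    rcases eq_or_ne t 0 with rfl | htne
    · simpa [cesaroFun] using h (Set.left_mem_Icc.2 zero_le_one)
    · simp only [cesaroFun, if_neg htne]
      congr 1
      apply intervalIntegral.integral_congr
      intro x hx
      apply h
      rw [Set.uIcc_of_le ht.1] at hx
      exact ⟨hx.1, le_trans hx.2 ht.2⟩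

end CesaroAux

/-- Boyd's formula: for `f ∈ C[0,1]`, `t ∈ [0,1]` and `n ≥ 1`,
`(Tⁿf)(t) = (1/(n−1)!) ∫_0^1 log(1/s)^{n−1} f(st) ds`. -/
theorem cesaro_iterate_eq_integral (f : ℝ → ℂ)
    (hf : ContinuousOn f (Set.Icc 0 1)) (n : ℕ) (hn : 1 ≤ n)
    (t : ℝ) (ht : t ∈ Set.Icc (0 : ℝ) 1) :
    cesaroFun^[n] f t
      = ((Nat.factorial (n - 1) : ℝ))⁻¹ •
          ∫ s in (0 : ℝ)..1, (Real.log s⁻¹) ^ (n - 1) • f (s * t) := by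
  obtain ⟨m, rfl⟩ : ∃ m, n = m + 1 := ⟨n - 1, (Nat.succ_pred_eq_of_pos hn).symm⟩
  simp only [Nat.add_sub_cancel]
  -- clamped extension of f
  set cl : ℝ → ℝ := fun x => min (max x 0) 1 with hcl
  have hclmem : ∀ x, cl x ∈ Set.Icc (0:ℝ) 1 :=
    fun x => ⟨le_min (le_max_right x 0) zero_le_one, min_le_right _ _⟩
  set fc : ℝ → ℂ := fun x => f (cl x) with hfc
  have hfccont : Continuous fc :=
    hf.comp_continuous ((continuous_id.max continuous_const).min continuous_const) hclmem
  have hfceq : Set.EqOn f fc (Set.Icc 0 1) := by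
    intro x hx
    have : cl x = x := by
      rw [hcl]
      simp only []
      rw [max_eq_left hx.1, min_eq_left hx.2]
    rw [hfc]
    simp only [this]
  have h1 : cesaroFun^[m+1] f t = cesaroFun^[m+1] fc t := cesaroIter_congr (m+1) hfceq ht
  rw [h1, cesaro_core m fc hfccont t ht]
  congr 1
  apply intervalIntegral.integral_congr
  intro s hs
  rw [Set.uIcc_of_le zero_le_one] at hs
  have hst : s * t ∈ Set.Icc (0:ℝ) 1 :=
    ⟨mul_nonneg hs.1 ht.1, mul_le_one₀ hs.2 ht.1 ht.2⟩
  beta_reduce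
  rw [← hfceq hst, Real.log_inv, Complex.real_smul, Complex.ofReal_pow, Complex.ofReal_neg]
end
end

section
/- Let T be the Cesàro operator on C_∞[0,∞), the space of continuous f : [0,∞) → ℂ with lim_{t→∞} f(t) existing, with sup norm. Then f ∈ Ran(I − T) if and only if f(0) = 0, lim_{t→∞} f(t) = 0, and the improper Riemann integral ∫_0^∞ f(t)/t dt exists (both at 0 and at ∞). -/
open Filter Topology MeasureTheory intervalIntegral

noncomputable section

lemma uIccIci {a b : ℝ} (ha : 0 ≤ a) (hb : 0 ≤ b) : Set.uIcc a b ⊆ Set.Ici 0 := fun x hx =>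
  le_trans (le_min ha hb) hx.1

lemma intInt {f : ℝ → ℂ} (hf : ContinuousOn f (Set.Ici 0)) {a b : ℝ} (ha : 0 ≤ a) (hb : 0 ≤ b) :
    IntervalIntegrable f volume a b :=
  (hf.mono (uIccIci ha hb)).intervalIntegrable

/-- `f s / s` is continuous on `(0,∞)`. -/
lemma contOn_div {f : ℝ → ℂ} (hf : ContinuousOn f (Set.Ici 0)) :
    ContinuousOn (fun s : ℝ => f s / (s : ℂ)) (Set.Ioi 0) := by
  apply ContinuousOn.div (hf.mono Set.Ioi_subset_Ici_self)
  · exact Complex.continuous_ofReal.continuousOn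
  · intro x hx
    simpa using (ne_of_gt hx)

lemma cesaro_zero {g : ℝ → ℂ} (hg : ContinuousOn g (Set.Ici 0)) :
    Tendsto (fun t : ℝ => (t : ℝ)⁻¹ • ∫ s in (0:ℝ)..t, g s) (nhdsWithin 0 (Set.Ioi 0))
      (nhds (g 0)) := by
  have hmeas : StronglyMeasurableAtFilter g (nhdsWithin 0 (Set.Ioi 0)) volume :=
    (hg.mono Set.Ioi_subset_Ici_self).stronglyMeasurableAtFilter_nhdsWithin measurableSet_Ioi 0
  have H : HasDerivWithinAt (fun u => ∫ x in (0:ℝ)..u, g x) (g 0) (Set.Ici 0) 0 :=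
    intervalIntegral.integral_hasDerivWithinAt_right (intInt hg le_rfl le_rfl) hmeas
      ((hg.continuousWithinAt (by simp)).mono Set.Ioi_subset_Ici_self)
  have := (hasDerivWithinAt_iff_tendsto_slope.1 H)
  rw [show Set.Ici (0:ℝ) \ {0} = Set.Ioi 0 by simp [Set.Ici_sdiff_left]] at this
  apply this.congr'
  filter_upwards [self_mem_nhdsWithin] with t ht
  simp only [slope_def_module, intervalIntegral.integral_same, sub_zero, smul_eq_mul]

lemma cesaro_top_zero {g : ℝ → ℂ} (hg : ContinuousOn g (Set.Ici 0))
    (hl : Tendsto g atTop (nhds (0:ℂ))) :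
    Tendsto (fun t : ℝ => (t : ℝ)⁻¹ • ∫ s in (0:ℝ)..t, g s) atTop (nhds 0) := by
  rw [NormedAddCommGroup.tendsto_nhds_zero]
  intro ε hε
  obtain ⟨T₀, hT₀⟩ := eventually_atTop.1 (NormedAddCommGroup.tendsto_nhds_zero.1 hl (ε/2)
    (by positivity))
  set T := max T₀ 0 with hT
  have hTnn : (0:ℝ) ≤ T := le_max_right _ _
  have hbd : ∀ s ≥ T, ‖g s‖ ≤ ε/2 := fun s hs => (hT₀ s (le_trans (le_max_left _ _) hs)).le
  set C := ‖∫ s in (0:ℝ)..T, g s‖ with hC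
  have hCnn : 0 ≤ C := norm_nonneg _
  filter_upwards [eventually_gt_atTop (max T (2*C/ε)), eventually_ge_atTop 1] with t ht ht1
  have htT : T ≤ t := le_of_lt (lt_of_le_of_lt (le_max_left _ _) ht)
  have htpos : (0:ℝ) < t := lt_of_lt_of_le zero_lt_one ht1
  have hsplit : (∫ s in (0:ℝ)..t, g s) = (∫ s in (0:ℝ)..T, g s) + ∫ s in T..t, g s :=
    (intervalIntegral.integral_add_adjacent_intervals (intInt hg le_rfl hTnn)
      (intInt hg hTnn (le_of_lt htpos))).symm
  have htail : ‖∫ s in T..t, g s‖ ≤ (ε/2) * |t - T| := by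
    apply intervalIntegral.norm_integral_le_of_norm_le_const
    intro x hx
    rw [Set.uIoc_of_le htT] at hx
    exact hbd x hx.1.le
  rw [hsplit]
  have h1 : ‖(t:ℝ)⁻¹ • ((∫ s in (0:ℝ)..T, g s) + ∫ s in T..t, g s)‖
      ≤ t⁻¹ * (C + (ε/2) * (t - T)) := by
    rw [norm_smul, Real.norm_eq_abs, abs_of_pos (inv_pos.2 htpos)]
    have := norm_add_le (∫ s in (0:ℝ)..T, g s) (∫ s in T..t, g s)
    rw [abs_of_nonneg (by linarith)] at htail
    gcongr
    linarith
  refine lt_of_le_of_lt h1 ?_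
  have h2 : t⁻¹ * C < ε/2 := by
    rw [inv_mul_lt_iff₀ htpos]
    have h3 : 2*C/ε < t := lt_of_le_of_lt (le_max_right _ _) ht
    rw [div_lt_iff₀ hε] at h3
    nlinarith
  have h4 : t⁻¹ * ((ε/2) * (t - T)) ≤ ε/2 := by
    rw [inv_mul_le_iff₀ htpos]
    nlinarith
  calc t⁻¹ * (C + ε / 2 * (t - T)) = t⁻¹ * C + t⁻¹ * (ε/2 * (t - T)) := by ring
    _ < ε/2 + ε/2 := by linarith
    _ = ε := by ring

lemma cesaro_atTop {g : ℝ → ℂ} (hg : ContinuousOn g (Set.Ici 0)) {l : ℂ}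
    (hl : Tendsto g atTop (nhds l)) :
    Tendsto (fun t : ℝ => (t : ℝ)⁻¹ • ∫ s in (0:ℝ)..t, g s) atTop (nhds l) := by
  have h0 := cesaro_top_zero (hg.sub continuousOn_const)
    (by exact (by simpa using hl.sub_const l : Tendsto (fun x => g x - l) atTop (nhds 0)))
  have hcongr : ∀ᶠ t : ℝ in atTop,
      (t : ℝ)⁻¹ • (∫ s in (0:ℝ)..t, (g s - l)) = (t : ℝ)⁻¹ • (∫ s in (0:ℝ)..t, g s) - l := by
    filter_upwards [eventually_ge_atTop 1] with t ht1
    have htpos : (0:ℝ) < t := lt_of_lt_of_le zero_lt_one ht1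
    rw [intervalIntegral.integral_sub (intInt hg le_rfl htpos.le) intervalIntegrable_const,
      intervalIntegral.integral_const, smul_sub, sub_zero, smul_smul,
      inv_mul_cancel₀ htpos.ne', one_smul]
  have := h0.congr' hcongr
  have := this.add_const l
  simpa using this

lemma hasDerivAt_primitive {f : ℝ → ℂ} (hf : ContinuousOn f (Set.Ici 0)) {a t : ℝ}
    (ha : 0 ≤ a) (ht : 0 < t) :
    HasDerivAt (fun u => ∫ s in a..u, f s) (f t) t := by
  apply intervalIntegral.integral_hasDerivAt_right (intInt hf ha ht.le)
  · exact (hf.mono Set.Ioi_subset_Ici_self).stronglyMeasurableAtFilter isOpen_Ioi t ht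
  · exact hf.continuousAt (Ici_mem_nhds ht)

lemma hasDerivAt_logint {f : ℝ → ℂ} (hf : ContinuousOn f (Set.Ici 0)) {t : ℝ} (ht : 0 < t) :
    HasDerivAt (fun u => ∫ s in (1:ℝ)..u, f s / (s:ℂ)) (f t / t) t := by
  apply intervalIntegral.integral_hasDerivAt_right
  · apply ((contOn_div hf).mono _).intervalIntegrable
    intro x hx
    exact lt_of_lt_of_le (lt_min zero_lt_one ht) hx.1
  · exact (contOn_div hf).stronglyMeasurableAtFilter isOpen_Ioi t ht
  · exact (contOn_div hf).continuousAt (Ioi_mem_nhds ht)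

lemma smul_coe_inv (t : ℝ) (z : ℂ) : (t:ℂ)⁻¹ • z = (t:ℝ)⁻¹ • z := by
  rw [smul_eq_mul, Complex.real_smul]
  push_cast
  ring

lemma cesaroFun_of_ne {g : ℝ → ℂ} {t : ℝ} (ht : t ≠ 0) :
    cesaroFun g t = (t:ℝ)⁻¹ • ∫ s in (0:ℝ)..t, g s := by
  rw [cesaroFun, if_neg ht, smul_coe_inv]

lemma forward_dir {f g : ℝ → ℂ} (hf : ContinuousOn f (Set.Ici 0))
    (hg : ContinuousOn g (Set.Ici 0)) {l : ℂ} (hl : Tendsto g atTop (nhds l))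
    (heq : ∀ t ∈ Set.Ici (0:ℝ), g t - cesaroFun g t = f t) :
    f 0 = 0 ∧ Tendsto f atTop (nhds (0 : ℂ)) ∧
      (∃ L₀ : ℂ, Tendsto (fun ε : ℝ => ∫ t in ε..1, f t / (t : ℂ))
        (nhdsWithin 0 (Set.Ioi 0)) (nhds L₀)) ∧
      (∃ L₁ : ℂ, Tendsto (fun R : ℝ => ∫ t in (1 : ℝ)..R, f t / (t : ℂ))
        atTop (nhds L₁)) := by
  set h : ℝ → ℂ := fun t => (t:ℝ)⁻¹ • ∫ s in (0:ℝ)..t, g s with hh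
  have hf0 : f 0 = 0 := by
    have := heq 0 (Set.self_mem_Ici)
    rw [cesaroFun, if_pos rfl, sub_self] at this
    exact this.symm
  have hfeq : ∀ t : ℝ, 0 < t → f t = g t - h t := by
    intro t ht
    rw [← heq t (Set.mem_Ici.2 ht.le), cesaroFun_of_ne ht.ne']
  have hderiv : ∀ t : ℝ, 0 < t → HasDerivAt h (f t / t) t := by
    intro t ht
    have hF := hasDerivAt_primitive hg le_rfl ht
    have hinv : HasDerivAt (fun u : ℝ => u⁻¹) (-(t^2)⁻¹) t := hasDerivAt_inv ht.ne'
    have H := hinv.smul hF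
    apply H.congr_deriv
    rw [hfeq t ht]
    simp only [hh, Complex.real_smul]
    push_cast
    have htc : (t:ℂ) ≠ 0 := by exact_mod_cast ht.ne'
    field_simp
    ring
  have hTg : Tendsto h atTop (nhds l) := cesaro_atTop hg hl
  have ftop : Tendsto f atTop (nhds (0:ℂ)) := by
    have : Tendsto (fun t => g t - h t) atTop (nhds (l - l)) := hl.sub hTg
    rw [sub_self] at this
    apply this.congr'
    filter_upwards [eventually_gt_atTop 0] with t ht
    exact (hfeq t ht).symm
  have hfdivint : ∀ a b : ℝ, 0 < a → 0 < b → IntervalIntegrable (fun t => f t / (t:ℂ)) volume a b := by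
    intro a b ha hb
    apply ((contOn_div hf).mono _).intervalIntegrable
    intro x hx
    exact lt_of_lt_of_le (lt_min ha hb) hx.1
  have key : ∀ a b : ℝ, 0 < a → 0 < b → (∫ t in a..b, f t / (t:ℂ)) = h b - h a := by
    intro a b ha hb
    apply intervalIntegral.integral_eq_sub_of_hasDerivAt
    · intro x hx
      exact hderiv x (lt_of_lt_of_le (lt_min ha hb) hx.1)
    · exact hfdivint a b ha hb
  refine ⟨hf0, ftop, ⟨h 1 - g 0, ?_⟩, ⟨l - h 1, ?_⟩⟩
  · have h0 := (tendsto_const_nhds (x := h 1)).sub (cesaro_zero hg)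
    apply (h0.congr' _)
    filter_upwards [self_mem_nhdsWithin] with ε hε
    exact (key ε 1 hε zero_lt_one).symm
  · have := hTg.sub_const (h 1)
    apply this.congr'
    filter_upwards [eventually_gt_atTop 0] with R hR
    exact (key 1 R zero_lt_one hR).symm

lemma backward_dir {f : ℝ → ℂ} (hf : ContinuousOn f (Set.Ici 0))
    (hf0 : f 0 = 0) (hftop : Tendsto f atTop (nhds (0:ℂ)))
    {L₀ : ℂ} (hL₀ : Tendsto (fun ε : ℝ => ∫ t in ε..1, f t / (t : ℂ))
      (nhdsWithin 0 (Set.Ioi 0)) (nhds L₀))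
    {L₁ : ℂ} (hL₁ : Tendsto (fun R : ℝ => ∫ t in (1 : ℝ)..R, f t / (t : ℂ)) atTop (nhds L₁)) :
    ∃ g : ℝ → ℂ, ContinuousOn g (Set.Ici 0) ∧ (∃ l : ℂ, Tendsto g atTop (nhds l)) ∧
      ∀ t ∈ Set.Ici (0 : ℝ), g t - cesaroFun g t = f t := by
  set p : ℝ → ℂ := fun t => ∫ s in (1:ℝ)..t, f s / (s:ℂ) with hp
  set g : ℝ → ℂ := fun t => if t ≤ 0 then -L₀ else p t with hgdef
  have hgp : ∀ t : ℝ, 0 < t → g t = p t := fun t ht => if_neg (not_le.2 ht)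
  have hgd : ∀ t : ℝ, 0 < t → HasDerivAt g (f t / t) t := by
    intro t ht
    apply (hasDerivAt_logint hf ht).congr_of_eventuallyEq
    filter_upwards [Ioi_mem_nhds ht] with u hu
    exact hgp u hu
  have hgc : ContinuousOn g (Set.Ici 0) := by
    intro t ht
    rcases eq_or_lt_of_le (Set.mem_Ici.1 ht) with h0 | h0
    · subst h0
      rw [← continuousWithinAt_Ioi_iff_Ici]
      have hg0 : g 0 = -L₀ := if_pos le_rfl
      rw [ContinuousWithinAt, hg0]
      apply hL₀.neg.congr'
      filter_upwards [self_mem_nhdsWithin] with ε hε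
      rw [hgp ε hε, hp]
      simp [intervalIntegral.integral_symm 1 ε]
    · exact (hgd t h0).continuousAt.continuousWithinAt
  have hgtop : Tendsto g atTop (nhds L₁) := by
    apply hL₁.congr'
    filter_upwards [eventually_gt_atTop 0] with R hR
    exact (hgp R hR).symm
  have hibp : ∀ t : ℝ, 0 < t →
      (∫ s in (0:ℝ)..t, g s) = (t:ℝ) • g t - ∫ s in (0:ℝ)..t, f s := by
    intro t ht
    set φ : ℝ → ℂ := fun s => (s:ℝ) • g s - ∫ u in (0:ℝ)..s, f u with hφ
    have key : ∫ s in (0:ℝ)..t, g s = φ t - φ 0 := by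
      apply intervalIntegral.integral_eq_sub_of_hasDeriv_right_of_le ht.le
      · apply ContinuousOn.sub
        · exact continuousOn_id.smul (hgc.mono (fun x hx => hx.1))
        · have h1 : (0:ℝ) ∈ Set.uIcc 0 t := Set.left_mem_uIcc
          have := intervalIntegral.continuousOn_primitive_interval'
            (intInt hf le_rfl ht.le) h1
          apply this.mono
          rw [Set.uIcc_of_le ht.le]
      · intro x hx
        have h1 : HasDerivAt (fun s : ℝ => (s:ℝ) • g s) (x • (f x / x) + (1:ℝ) • g x) x :=
          (hasDerivAt_id x).smul (hgd x hx.1)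
        have h2 : HasDerivAt (fun s => ∫ u in (0:ℝ)..s, f u) (f x) x :=
          hasDerivAt_primitive hf le_rfl hx.1
        have h3 := (h1.sub h2).hasDerivWithinAt (s := Set.Ioi x)
        have h4 : x • (f x / x) + (1:ℝ) • g x - f x = g x := by
          rw [one_smul, Complex.real_smul]
          have hxc : (x:ℂ) ≠ 0 := by exact_mod_cast hx.1.ne'
          field_simp
          ring
        rwa [h4] at h3
      · exact intInt hgc le_rfl ht.le
    have hφ0 : φ 0 = 0 := by simp [hφ]
    rw [key, hφ0, sub_zero]
  refine ⟨fun t => f t + g t, hf.add hgc, ⟨L₁, by simpa using hftop.add hgtop⟩, ?_⟩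
  intro t ht
  rcases eq_or_lt_of_le (Set.mem_Ici.1 ht) with h0 | h0
  · rw [← h0, cesaroFun, if_pos rfl]
    simp [hf0]
  · rw [cesaroFun_of_ne h0.ne',
      intervalIntegral.integral_add (intInt hf le_rfl h0.le) (intInt hgc le_rfl h0.le),
      hibp t h0, add_sub_cancel, smul_smul, inv_mul_cancel₀ h0.ne', one_smul]
    ring

/-- For the Cesàro operator on `C_∞[0,∞)`: `f ∈ Ran(I − T)` iff `f(0) = 0`,
`lim_{t→∞} f(t) = 0`, and the improper Riemann integral `∫_0^∞ f(t)/t dt`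
exists (both at `0` and at `∞`). -/
theorem mem_range_one_sub_cesaro_halfline (f : ℝ → ℂ)
    (hf : ContinuousOn f (Set.Ici 0)) (hflim : ∃ l : ℂ, Tendsto f atTop (nhds l)) :
    (∃ g : ℝ → ℂ, ContinuousOn g (Set.Ici 0) ∧ (∃ l : ℂ, Tendsto g atTop (nhds l)) ∧
        ∀ t ∈ Set.Ici (0 : ℝ), g t - cesaroFun g t = f t) ↔
      (f 0 = 0 ∧ Tendsto f atTop (nhds (0 : ℂ)) ∧
        (∃ L₀ : ℂ, Tendsto (fun ε : ℝ => ∫ t in ε..1, f t / (t : ℂ))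
          (nhdsWithin 0 (Set.Ioi 0)) (nhds L₀)) ∧
        (∃ L₁ : ℂ, Tendsto (fun R : ℝ => ∫ t in (1 : ℝ)..R, f t / (t : ℂ))
          atTop (nhds L₁))) := by
  constructor
  · rintro ⟨g, hg, ⟨l, hl⟩, heq⟩
    exact forward_dir hf hg hl heq
  · rintro ⟨hf0, hftop, ⟨L₀, hL₀⟩, ⟨L₁, hL₁⟩⟩
    exact backward_dir hf hf0 hftop hL₀ hL₁

end
end
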